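/- Let k ≥ 3 and r be positive integers with r < k, let p = (p_1,…,p_k) be a tuple of non-negative integers, let a ∈ {2,3,…,k−1} and D ⊆ [a−2]. Define K_{i,j} and 𝔖_{k,a} as follows: K_{i,i} = ∅ if i∈[a−2]∖D, K_{i,i} = [k] if i∈D∪{a−1}, K_{i,j} = ]i,j] for i∈{a−1,…,k−1}, j∈[k], (i,j) ≠ (a−1,a−1); 𝔖_{k,a} is the set of permutations π of [k] with π(i)=i for all i∈[a−2]. For a surjection f:[k−1]→[r], π∈𝔖_{k,a} and j∈[k−1], set H_{f,π,j} = ∪ { K_{i,π(i)} : i∈[k−1]∖{j}, f(i)=f(j) }. Then Σ sgn(π) = 0, where the sum is over all triples (S,f,π) with S∈S_{p,r}, f a surjection from [k−1] onto [r], and π∈𝔖_{k,a}, satisfying K_{i,π(i)} ⊆ S_{f(i)} for every i∈[k−1] and additionally f(a−1) ≠ f(a), a ∉ H_{f,π,a−1}, and a ∉ H_{f,π,a}. -/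

import Mathlib

/-! The triples cancel in pairs under a sign-reversing involution: compose `f` and `π` with the
transposition of `a - 1` and `a`, and exchange the membership of `a` in the blocks `S_{f(a-1)}`
and `S_{f(a)}`; this keeps the number of blocks containing each point, so `S` stays in
`𝒮_{p,r}`. Since `K_{a-1,j} = K_{a,j} ∪ {a}` with `a ∉ K_{a,j}`, the two moved rows still fit
into their new blocks, and `a ∉ H_{f,π,a-1} ∪ H_{f,π,a}` says that no other row sharing one of
these blocks needs `a`. -/

open Finset

/-- The cyclic interval `]i,j]` of `[k] = {1,…,k}`, realized inside `ZMod k`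
(the element `k` of `[k]` is represented by `0 : ZMod k`). -/
def cyc (k : ℕ) [NeZero k] (i j : ZMod k) : Finset (ZMod k) :=
  Finset.univ.filter fun x => 1 ≤ (x - i).val ∧ (x - i).val ≤ (j - i).val

/-- Membership in `𝒮_{p,r}` : each `j ∈ [k]` belongs to exactly `p j` of the sets `S_1,…,S_r`. -/
def SprMem (k r : ℕ) [NeZero k] (p : ZMod k → ℕ) (S : Fin r → Finset (ZMod k)) : Prop :=
  ∀ j : ZMod k, Nat.card {i : Fin r // j ∈ S i} = p j

/-- Membership in `ℳ_{p,r}` : member of `𝒮_{p,r}` all of whose sets are proper subsets of `[k]`. -/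
def MprMem (k r : ℕ) [NeZero k] (p : ZMod k → ℕ) (S : Fin r → Finset (ZMod k)) : Prop :=
  SprMem k r p S ∧ ∀ i, S i ≠ Finset.univ

/-- `|ℳ_{p,r}|`. -/
noncomputable def Mcard (k r : ℕ) [NeZero k] (p : ZMod k → ℕ) : ℕ :=
  Nat.card {S : Fin r → Finset (ZMod k) // MprMem k r p S}

/-- `|𝒮_{p,r}|`. -/
noncomputable def Scard (k r : ℕ) [NeZero k] (p : ZMod k → ℕ) : ℕ :=
  Nat.card {S : Fin r → Finset (ZMod k) // SprMem k r p S}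

/-- `|ℳ_{q,r}|` for an integer-valued tuple `q` (empty if some entry of `q` is negative). -/
noncomputable def McardZ (k r : ℕ) [NeZero k] (q : ZMod k → ℤ) : ℕ :=
  Nat.card {S : Fin r → Finset (ZMod k) //
    (∀ j : ZMod k, (Nat.card {i : Fin r // j ∈ S i} : ℤ) = q j) ∧ ∀ i, S i ≠ Finset.univ}

/-- `alphaRel k S i j` holds iff `j = α(i,S)`. -/
def alphaRel (k : ℕ) [NeZero k] (S : Finset (ZMod k)) (i j : ZMod k) : Prop :=
  if S = Finset.univ then j = i else j ∉ S ∧ cyc k i (j - 1) ⊆ S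

/-- `betaRel k S i j` holds iff `j = β(i,S)`. -/
def betaRel (k : ℕ) [NeZero k] (S : Finset (ZMod k)) (i j : ZMod k) : Prop :=
  if S = Finset.univ then j = i else j + 1 ∉ S ∧ cyc k i j ⊆ S

/-- `gammaRel k S i j` holds iff `j = γ(i,S)`. -/
def gammaRel (k : ℕ) [NeZero k] (S : Finset (ZMod k)) (i j : ZMod k) : Prop :=
  if S = Finset.univ then j = i
  else if i ∈ S then j = i - 1
  else j + 1 ∉ S ∧ cyc k i j ⊆ S

/-- The digraph on `[k]` with the `k-1` arcs `(i, ζ(i, S_{f i}))` for `i ∈ [k-1]`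
(the nonzero elements of `ZMod k`) is a tree, i.e. a spanning tree oriented toward
the root `k` (represented by `0`): following the arcs from any vertex reaches the root. -/
def GIsTree (k r : ℕ) [NeZero k] (zeta : Finset (ZMod k) → ZMod k → ZMod k → Prop)
    (S : Fin r → Finset (ZMod k)) (f : {i : ZMod k // i ≠ 0} → Fin r) : Prop :=
  ∃ g : ZMod k → ZMod k, g 0 = 0 ∧
    (∀ i : {i : ZMod k // i ≠ 0}, zeta (S (f i)) i.1 (g i.1)) ∧
    ∀ x : ZMod k, ∃ n : ℕ, g^[n] x = 0

/-- Sample space: pairs of a tuple `S ∈ ℳ_{p,r}` and a surjection `f : [k-1] → [r]`,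
with the uniform probability measure. -/
abbrev OmM (k r : ℕ) [NeZero k] (p : ZMod k → ℕ) : Type :=
  {om : (Fin r → Finset (ZMod k)) × ({i : ZMod k // i ≠ 0} → Fin r) //
    MprMem k r p om.1 ∧ Function.Surjective om.2}

/-- Sample space `Ω`: pairs of a tuple `S ∈ 𝒮_{p,r}` and a surjection `f : [k-1] → [r]`,
with the uniform probability measure. -/
abbrev OmS (k r : ℕ) [NeZero k] (p : ZMod k → ℕ) : Type :=
  {om : (Fin r → Finset (ZMod k)) × ({i : ZMod k // i ≠ 0} → Fin r) //
    SprMem k r p om.1 ∧ Function.Surjective om.2}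

/-- Uniform probability of an event `A` in a (finite) sample space `Om`. -/
noncomputable def PrU {Om : Type} (A : Set Om) : ℚ :=
  (Nat.card A : ℚ) / (Nat.card Om : ℚ)

/-- The `Pr`-determinant of a `k × k` matrix of events (rows and columns indexed by
`[k]`, i.e. by `ZMod k`). -/
noncomputable def Pdet {k : ℕ} [NeZero k] {Om : Type} (E : ZMod k → ZMod k → Set Om) : ℚ :=
  ∑ pi : Equiv.Perm (ZMod k), ((Equiv.Perm.sign pi : ℤ) : ℚ) * PrU (⋂ i : ZMod k, E i (pi i))

/-- The matrix of events `M_α`: `M_{α,i,j} = I^{f(i)}_{i,j}` for `i ∈ [k-1]`, and the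
row of `i = k` (i.e. `0`) is constant equal to `Ω`. -/
def Malpha (k r : ℕ) [NeZero k] (p : ZMod k → ℕ) (i j : ZMod k) : Set (OmS k r p) :=
  {om : OmS k r p | ∀ hi : i ≠ 0, cyc k i j ⊆ om.1.1 (om.1.2 ⟨i, hi⟩)}

/-- The matrix of events `M_β`: `M_{β,i,j} = J^{f(i)}_{i,j+1}` for `i ∈ [k-1]`, and the
row of `i = k` (i.e. `0`) is constant equal to `Ω`. -/
def Mbeta (k r : ℕ) [NeZero k] (p : ZMod k → ℕ) (i j : ZMod k) : Set (OmS k r p) :=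
  {om : OmS k r p | ∀ hi : i ≠ 0,
    if i = j + 1 then om.1.1 (om.1.2 ⟨i, hi⟩) = Finset.univ
    else cyc k i (j + 1) ⊆ om.1.1 (om.1.2 ⟨i, hi⟩)}

/-- Membership of `om` in the event `J^{f(i)}_{a,b}`. -/
def Jmem (k r : ℕ) [NeZero k] (p : ZMod k → ℕ) (om : OmS k r p)
    (i : {i : ZMod k // i ≠ 0}) (a b : ZMod k) : Prop :=
  if a = b then om.1.1 (om.1.2 i) = Finset.univ else cyc k a b ⊆ om.1.1 (om.1.2 i)

/-- The sets `K_{i,j}` of Section 5.1 (for given `a ∈ {2,…,k-1}` and `D ⊆ [a-2]`):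
`K_{i,i} = ∅` for `i ∈ [a-2] ∖ D`, `K_{i,i} = [k]` for `i ∈ D ∪ {a-1}`, and
`K_{i,j} = ]i,j]` for `i ∈ {a-1,…,k-1}`, `j ∈ [k]`, `(i,j) ≠ (a-1,a-1)`.
(The element `m ∈ [k]` is represented by `(m : ZMod k)`, so `i = a-1` means
`i.val + 1 = a`.) -/
def Kset (k a : ℕ) [NeZero k] (D : Finset (ZMod k)) (i j : ZMod k) : Finset (ZMod k) :=
  if i = j then (if i.val + 1 = a ∨ i ∈ D then Finset.univ else ∅) else cyc k i j

/-- `H_{f,π,j} = ∪ { K_{i,π(i)} : i ∈ [k-1] ∖ {j}, f(i) = f(j) }`. -/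
def Hset (k a r : ℕ) [NeZero k] (D : Finset (ZMod k))
    (f : {i : ZMod k // i ≠ 0} → Fin r) (pi : Equiv.Perm (ZMod k))
    (j : {i : ZMod k // i ≠ 0}) : Finset (ZMod k) :=
  (Finset.univ.filter fun i : {i : ZMod k // i ≠ 0} => i ≠ j ∧ f i = f j).biUnion
    (fun i => Kset k a D i.1 (pi i.1))

lemma mem_cyc {k : ℕ} [NeZero k] {i j x : ZMod k} :
    x ∈ cyc k i j ↔ 1 ≤ (x - i).val ∧ (x - i).val ≤ (j - i).val := by
  simp [cyc]

section CyclicInterval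

variable {k : ℕ} [NeZero k]

lemma cyc_self (i : ZMod k) : cyc k i i = ∅ := by
  ext x
  simp only [mem_cyc, sub_self, ZMod.val_zero, notMem_empty, iff_false]
  omega

lemma left_notMem_cyc (i j : ZMod k) : i ∉ cyc k i j := by
  simp [mem_cyc]

lemma insert_cyc_sub_one (i : ZMod k) : insert i (cyc k i (i - 1)) = univ := by
  ext x
  obtain ⟨n, rfl⟩ : ∃ n, k = n + 1 := ⟨k - 1, by have := NeZero.pos k; omega⟩
  have hx : (x - i).val < n + 1 := ZMod.val_lt _
  simp only [mem_insert, mem_cyc, sub_sub_cancel_left, mem_univ, iff_true, ZMod.val_neg_one,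
    ← sub_eq_zero (a := x), ← ZMod.val_eq_zero (x - i)]
  omega

lemma cyc_sub_one {i j : ZMod k} (hj : j ≠ i - 1) : cyc k (i - 1) j = insert i (cyc k i j) := by
  have hk : 1 < k := by
    by_contra! h
    obtain rfl : k = 1 := by have := NeZero.pos k; omega
    exact hj (Subsingleton.elim _ _)
  have : Fact (1 < k) := ⟨hk⟩
  have hsucc : ∀ u : ZMod k, (u + 1).val = if u.val + 1 = k then 0 else u.val + 1 := by
    intro u
    have hu := ZMod.val_lt u
    rw [ZMod.val_add, ZMod.val_one]
    split_ifs with h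
    · rw [h, Nat.mod_self]
    · exact Nat.mod_eq_of_lt (by omega)
  have hv : (j - i).val + 1 ≠ k := by
    intro h
    apply hj
    rw [← sub_eq_zero, sub_sub_eq_add_sub, ← ZMod.val_eq_zero, ← sub_add_eq_add_sub, hsucc,
      if_pos h]
  ext x
  have hu := ZMod.val_lt (x - i)
  rw [mem_insert, mem_cyc, mem_cyc, ← sub_eq_zero (a := x), ← ZMod.val_eq_zero,
    sub_sub_eq_add_sub, sub_sub_eq_add_sub, ← sub_add_eq_add_sub, ← sub_add_eq_add_sub, hsucc,
    hsucc, if_neg hv]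
  have hw := ZMod.val_lt (j - i)
  split_ifs <;> omega

end CyclicInterval

section Kset

variable {k a : ℕ} [NeZero k] {D : Finset (ZMod k)}

lemma Kset_natCast (hak : a < k) (haD : (a : ZMod k) ∉ D) (j : ZMod k) :
    Kset k a D a j = cyc k a j := by
  have haval : (a : ZMod k).val = a := ZMod.val_natCast_of_lt hak
  unfold Kset
  split_ifs with hj hcase
  · exact (hcase.elim (by omega) haD).elim
  · rw [← hj, cyc_self]
  · rfl

lemma Kset_natCast_sub_one (ha : 1 ≤ a) (hak : a ≤ k) (j : ZMod k) :
    Kset k a D ((a : ZMod k) - 1) j = insert (a : ZMod k) (cyc k a j) := by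
  have hval : ((a : ZMod k) - 1).val + 1 = a := by
    rw [← Nat.cast_pred ha, ZMod.val_natCast_of_lt (by omega)]
    omega
  unfold Kset
  split_ifs with hj hcase
  · rw [← hj, insert_cyc_sub_one]
  · exact (hcase (Or.inl hval)).elim
  · exact cyc_sub_one (Ne.symm hj)

end Kset

lemma notMem_Hset_iff {k a r : ℕ} [NeZero k] {D : Finset (ZMod k)}
    {f : {i : ZMod k // i ≠ 0} → Fin r} {π : Equiv.Perm (ZMod k)}
    {j : {i : ZMod k // i ≠ 0}} {x : ZMod k} :
    x ∉ Hset k a r D f π j ↔ ∀ i, i ≠ j → f i = f j → x ∉ Kset k a D i.1 (π i.1) := by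
  simp only [Hset, mem_biUnion, mem_filter, mem_univ, true_and, not_exists, not_and]
  tauto

section SwapMem

variable {α ι : Type*} [DecidableEq α]

def swapMem (x : α) (e : Equiv.Perm ι) (S : ι → Finset α) (l : ι) : Finset α :=
  if x ∈ S (e l) then insert x (S l) else (S l).erase x

lemma mem_swapMem {x y : α} {e : Equiv.Perm ι} {S : ι → Finset α} {l : ι} :
    y ∈ swapMem x e S l ↔ y ∈ S (if y = x then e l else l) := by
  unfold swapMem
  by_cases hy : y = x <;> split_ifs <;> simp_all

lemma swapMem_swapMem {x : α} {e : Equiv.Perm ι} (he : Function.Involutive e)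
    (S : ι → Finset α) : swapMem x e (swapMem x e S) = S := by
  ext l y
  by_cases hy : y = x <;> simp [mem_swapMem, hy, he l]

lemma card_mem_swapMem [Finite ι] (x y : α) (e : Equiv.Perm ι) (S : ι → Finset α) :
    Nat.card {l // y ∈ swapMem x e S l} = Nat.card {l // y ∈ S l} :=
  Nat.card_congr <| (if y = x then e else Equiv.refl ι).subtypeEquiv fun l => by
    by_cases hy : y = x <;> simp [mem_swapMem, hy]

lemma subset_swapMem {x : α} {e : Equiv.Perm ι} {S : ι → Finset α} {l : ι} {T : Finset α}
    (hT : ∀ y ∈ T, y ≠ x → y ∈ S l) (hx : x ∈ T → x ∈ S (e l)) : T ⊆ swapMem x e S l := by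
  intro y hy
  rw [mem_swapMem]
  split_ifs with hyx
  · subst hyx
    exact hx hy
  · exact hT y hy hyx

end SwapMem

lemma SprMem.swapMem {k r : ℕ} [NeZero k] {p : ZMod k → ℕ} {S : Fin r → Finset (ZMod k)}
    (hS : SprMem k r p S) (x : ZMod k) (e : Equiv.Perm (Fin r)) :
    SprMem k r p (swapMem x e S) := fun j => (card_mem_swapMem x j e S).trans (hS j)

section Exchange

variable {k a r : ℕ} {am aa : {i : ZMod k // i ≠ 0}}

def exchange (am aa : {i : ZMod k // i ≠ 0})
    (x : (Fin r → Finset (ZMod k)) × ({i : ZMod k // i ≠ 0} → Fin r) × Equiv.Perm (ZMod k)) :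
    (Fin r → Finset (ZMod k)) × ({i : ZMod k // i ≠ 0} → Fin r) × Equiv.Perm (ZMod k) :=
  (swapMem aa.1 (Equiv.swap (x.2.1 am) (x.2.1 aa)) x.1, x.2.1 ∘ Equiv.swap am aa,
    x.2.2 * Equiv.swap am.1 aa.1)

lemma exchange_exchange
    (x : (Fin r → Finset (ZMod k)) × ({i : ZMod k // i ≠ 0} → Fin r) × Equiv.Perm (ZMod k)) :
    exchange am aa (exchange am aa x) = x := by
  obtain ⟨S, f, π⟩ := x
  simp only [exchange, Function.comp_apply, Equiv.swap_apply_left, Equiv.swap_apply_right,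
    Equiv.swap_comm (f aa), swapMem_swapMem (Equiv.swap_apply_self _ _), mul_assoc,
    Equiv.swap_mul_self, mul_one, Prod.mk.injEq, true_and, and_true]
  funext i
  simp

lemma sign_exchange [NeZero k] (hne : am ≠ aa)
    (x : (Fin r → Finset (ZMod k)) × ({i : ZMod k // i ≠ 0} → Fin r) × Equiv.Perm (ZMod k)) :
    (Equiv.Perm.sign (exchange am aa x).2.2 : ℤ) = -Equiv.Perm.sign x.2.2 := by
  simp [exchange, Equiv.Perm.sign_swap (Subtype.coe_ne_coe.mpr hne)]

variable {S : Fin r → Finset (ZMod k)} {f : {i : ZMod k // i ≠ 0} → Fin r}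
  {π : Equiv.Perm (ZMod k)}

lemma Kset_subset_exchange [NeZero k] {D : Finset (ZMod k)}
    (hKam : ∀ j, Kset k a D am.1 j = insert aa.1 (Kset k a D aa.1 j))
    (hKaa : ∀ j, aa.1 ∉ Kset k a D aa.1 j)
    (hK : ∀ i : {i : ZMod k // i ≠ 0}, Kset k a D i.1 (π i.1) ⊆ S (f i))
    (hHam : aa.1 ∉ Hset k a r D f π am) (hHaa : aa.1 ∉ Hset k a r D f π aa)
    (i : {i : ZMod k // i ≠ 0}) :
    Kset k a D i.1 ((π * Equiv.swap am.1 aa.1) i.1) ⊆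
      swapMem aa.1 (Equiv.swap (f am) (f aa)) S ((f ∘ Equiv.swap am aa) i) := by
  by_cases him : i = am
  · subst him
    have haS : aa.1 ∈ S (f i) := hK i (by rw [hKam]; exact mem_insert_self _ _)
    simp only [Equiv.Perm.mul_apply, Equiv.swap_apply_left, Function.comp_apply]
    refine subset_swapMem (fun y hy hya => hK aa ?_) (fun _ => by rwa [Equiv.swap_apply_right])
    rw [hKam] at hy
    exact (mem_insert.mp hy).resolve_left hya
  by_cases hia : i = aa
  · subst hia
    simp only [Equiv.Perm.mul_apply, Equiv.swap_apply_right, Function.comp_apply]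
    refine subset_swapMem (fun y hy _ => hK am ?_) (fun h => (hKaa _ h).elim)
    rw [hKam]
    exact mem_insert_of_mem hy
  have hi : i.1 ≠ am.1 ∧ i.1 ≠ aa.1 := ⟨Subtype.coe_ne_coe.mpr him, Subtype.coe_ne_coe.mpr hia⟩
  simp only [Equiv.Perm.mul_apply, Equiv.swap_apply_of_ne_of_ne hi.1 hi.2, Function.comp_apply,
    Equiv.swap_apply_of_ne_of_ne him hia]
  refine subset_swapMem (fun y hy _ => hK i hy) fun hai => ?_
  have hfam : f i ≠ f am := fun h => notMem_Hset_iff.mp hHam i him h hai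
  have hfaa : f i ≠ f aa := fun h => notMem_Hset_iff.mp hHaa i hia h hai
  rw [Equiv.swap_apply_of_ne_of_ne hfam hfaa]
  exact hK i hai

lemma notMem_Hset_exchange [NeZero k] {D : Finset (ZMod k)} {x : ZMod k}
    {u v : {i : ZMod k // i ≠ 0}} (hf : f u ≠ f v) (hH : x ∉ Hset k a r D f π v) :
    x ∉ Hset k a r D (f ∘ Equiv.swap u v) (π * Equiv.swap u.1 v.1) u := by
  rw [notMem_Hset_iff] at hH ⊢
  intro i hiu hfi
  simp only [Function.comp_apply, Equiv.swap_apply_left] at hfi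
  by_cases hiv : i = v
  · subst hiv
    rw [Equiv.swap_apply_right] at hfi
    exact (hf hfi).elim
  rw [Equiv.swap_apply_of_ne_of_ne hiu hiv] at hfi
  rw [Equiv.Perm.mul_apply,
    Equiv.swap_apply_of_ne_of_ne (Subtype.coe_ne_coe.mpr hiu) (Subtype.coe_ne_coe.mpr hiv)]
  exact hH i hiv hfi

end Exchange

open scoped Classical in
theorem signed_sum_X_general (k r : ℕ) [NeZero k]
    (p : ZMod k → ℕ) (a : ℕ) (ha : 2 ≤ a) (hak : a ≤ k - 1)
    (D : Finset (ZMod k)) (hD : ∀ i ∈ D, 1 ≤ i.val ∧ i.val ≤ a - 2)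
    (am aa : {i : ZMod k // i ≠ 0}) (ham : am.1 = (a : ZMod k) - 1)
    (haa : aa.1 = (a : ZMod k)) :
    ∑ x ∈ Finset.univ.filter (fun x : (Fin r → Finset (ZMod k)) ×
          ({i : ZMod k // i ≠ 0} → Fin r) × Equiv.Perm (ZMod k) =>
        SprMem k r p x.1 ∧ Function.Surjective x.2.1 ∧
        (∀ i : ZMod k, 1 ≤ i.val → i.val ≤ a - 2 → x.2.2 i = i) ∧
        (∀ i : {i : ZMod k // i ≠ 0}, Kset k a D i.1 (x.2.2 i.1) ⊆ x.1 (x.2.1 i)) ∧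
        x.2.1 am ≠ x.2.1 aa ∧
        (a : ZMod k) ∉ Hset k a r D x.2.1 x.2.2 am ∧
        (a : ZMod k) ∉ Hset k a r D x.2.1 x.2.2 aa),
      (Equiv.Perm.sign x.2.2 : ℤ) = 0 := by
  have haval : aa.1.val = a := by rw [haa, ZMod.val_natCast_of_lt (by omega)]
  have hamval : am.1.val = a - 1 := by
    rw [ham, ← Nat.cast_pred (by omega), ZMod.val_natCast_of_lt (by omega)]
  have hne : am ≠ aa := by
    rintro rfl
    omega
  have haD : (a : ZMod k) ∉ D := fun h => by
    have := hD _ h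
    rw [← haa, haval] at this
    omega
  have hKam (j) : Kset k a D am.1 j = insert aa.1 (Kset k a D aa.1 j) := by
    rw [ham, haa, Kset_natCast_sub_one (by omega) (by omega), Kset_natCast (by omega) haD]
  have hKaa (j) : aa.1 ∉ Kset k a D aa.1 j := by
    rw [haa, Kset_natCast (by omega) haD]
    exact left_notMem_cyc _ _
  rw [← haa]
  refine sum_involution (fun x _ => exchange am aa x)
    (fun x _ => by rw [sign_exchange hne, add_neg_cancel])
    (fun x _ hx h => hx (by have := sign_exchange hne x; rw [h] at this; omega))
    (fun x hx => ?_) (fun x _ => exchange_exchange x)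
  obtain ⟨S, f, π⟩ := x
  simp only [mem_filter, mem_univ, true_and] at hx ⊢
  obtain ⟨hS, hf, hfix, hK, hff, hHam, hHaa⟩ := hx
  refine ⟨hS.swapMem _ _, hf.comp (Equiv.swap am aa).surjective, fun i h1 h2 => ?_,
    Kset_subset_exchange hKam hKaa hK hHam hHaa, by simpa [exchange] using hff.symm,
    notMem_Hset_exchange hff hHaa, ?_⟩
  · rw [exchange, Equiv.Perm.mul_apply, Equiv.swap_apply_of_ne_of_ne (by rintro rfl; omega)
      (by rintro rfl; omega), hfix i h1 h2]
  · rw [exchange, Equiv.swap_comm am aa, Equiv.swap_comm am.1 aa.1]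
    exact notMem_Hset_exchange (Ne.symm hff) hHam

open scoped Classical in
/-- Lemma 10 (`X = 0`): the signed count of triples `(S,f,π)` in `Ω(N^{a,D})` with
`f(a-1) ≠ f(a)`, `a ∉ H_{f,π,a-1}` and `a ∉ H_{f,π,a}` is zero. Here `am` and `aa`
denote the elements `a-1` and `a` of `[k-1]`. -/
theorem signed_sum_X (k r : ℕ) [NeZero k] (hk : 3 ≤ k) (hr : 0 < r) (hrk : r < k)
    (p : ZMod k → ℕ) (a : ℕ) (ha : 2 ≤ a) (hak : a ≤ k - 1)
    (D : Finset (ZMod k)) (hD : ∀ i ∈ D, 1 ≤ i.val ∧ i.val ≤ a - 2)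
    (am aa : {i : ZMod k // i ≠ 0}) (ham : am.1 = (a : ZMod k) - 1)
    (haa : aa.1 = (a : ZMod k)) :
    ∑ x ∈ Finset.univ.filter (fun x : (Fin r → Finset (ZMod k)) ×
          ({i : ZMod k // i ≠ 0} → Fin r) × Equiv.Perm (ZMod k) =>
        SprMem k r p x.1 ∧ Function.Surjective x.2.1 ∧
        (∀ i : ZMod k, 1 ≤ i.val → i.val ≤ a - 2 → x.2.2 i = i) ∧
        (∀ i : {i : ZMod k // i ≠ 0}, Kset k a D i.1 (x.2.2 i.1) ⊆ x.1 (x.2.1 i)) ∧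
        x.2.1 am ≠ x.2.1 aa ∧
        (a : ZMod k) ∉ Hset k a r D x.2.1 x.2.2 am ∧
        (a : ZMod k) ∉ Hset k a r D x.2.1 x.2.2 aa),
      (Equiv.Perm.sign x.2.2 : ℤ) = 0 :=
  signed_sum_X_general k r p a ha hak D hD am aa ham haa
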